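/- For any given a, b ∈ ℝ, the equation φ(v)/v + b Φ(v) = a in the unknown v ∈ (0,∞) has at most two solutions; that is, the set {v > 0 : φ(v)/v + b Φ(v) = a} has cardinality at most 2. -/

import Mathlib

open MeasureTheory ProbabilityTheory Filter Topology

/-- The standard Gaussian density `φ(x) = e^{-x²/2}/√(2π)`. -/
noncomputable def gaussPhi (x : ℝ) : ℝ := Real.exp (-x ^ 2 / 2) / Real.sqrt (2 * Real.pi)

/-- The standard Gaussian distribution function `Φ(x) = ∫_{-∞}^x φ`. -/
noncomputable def gaussCdf (x : ℝ) : ℝ := ((gaussianReal 0 1) (Set.Iic x)).toReal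

/-!
The function `f v = φ(v)/v + b Φ(v)` has derivative `φ(v) (b - 1 - 1/v²)` on `(0, ∞)`, and
the second factor is strictly increasing there, so `f'` vanishes at most once. If `f` took
the same value at three points `x < y < z`, Rolle's theorem would give zeros of `f'` in
`(x, y)` and in `(y, z)`.
-/

theorem Set.exists_subset_pair_of_not_lt_lt {α : Type*} [LinearOrder α] [Nonempty α]
    {S : Set α} (h : ∀ x ∈ S, ∀ y ∈ S, ∀ z ∈ S, x < y → y < z → False) :
    ∃ v₁ v₂ : α, S ⊆ {v₁, v₂} := by
  by_contra! hS
  obtain ⟨x, hx, -⟩ := Set.not_subset.mp (hS (Classical.arbitrary α) (Classical.arbitrary α))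
  obtain ⟨y, hy, hyx⟩ := Set.not_subset.mp (hS x x)
  obtain ⟨z, hz, hzxy⟩ := Set.not_subset.mp (hS x y)
  simp only [Set.mem_insert_iff, Set.mem_singleton_iff, or_self, not_or] at hyx hzxy
  rcases lt_or_gt_of_ne hyx with hxy | hxy <;>
  rcases lt_or_gt_of_ne hzxy.1 with hxz | hxz <;>
  rcases lt_or_gt_of_ne hzxy.2 with hyz | hyz <;>
  first
  | exact h _ hx _ hy _ hz ‹_› ‹_› | exact h _ hx _ hz _ hy ‹_› ‹_›
  | exact h _ hy _ hx _ hz ‹_› ‹_› | exact h _ hy _ hz _ hx ‹_› ‹_›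
  | exact h _ hz _ hx _ hy ‹_› ‹_› | exact h _ hz _ hy _ hx ‹_› ‹_›

theorem exists_levelSet_subset_pair_of_hasDerivAt {D : Set ℝ} (hD : D.OrdConnected)
    {g g' : ℝ → ℝ} (hg : ∀ x ∈ D, HasDerivAt g (g' x) x)
    (hg' : {x ∈ D | g' x = 0}.Subsingleton) (a : ℝ) :
    ∃ v₁ v₂ : ℝ, {v ∈ D | g v = a} ⊆ {v₁, v₂} := by
  have rolle : ∀ p ∈ {v ∈ D | g v = a}, ∀ q ∈ {v ∈ D | g v = a}, p < q →
      ∃ ξ ∈ Set.Ioo p q, ξ ∈ {x ∈ D | g' x = 0} := by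
    rintro p ⟨hpD, hp⟩ q ⟨hqD, hq⟩ hpq
    have hIcc : Set.Icc p q ⊆ D := hD.out hpD hqD
    obtain ⟨ξ, hξ, hξ0⟩ := exists_hasDerivAt_eq_zero hpq
      (fun t ht => (hg t (hIcc ht)).continuousAt.continuousWithinAt) (hp.trans hq.symm)
      (fun t ht => hg t (hIcc (Set.Ioo_subset_Icc_self ht)))
    exact ⟨ξ, hξ, hIcc (Set.Ioo_subset_Icc_self hξ), hξ0⟩
  refine Set.exists_subset_pair_of_not_lt_lt fun x hx y hy z hz hxy hyz => ?_
  obtain ⟨ξ, hξ, hξ0⟩ := rolle x hx y hy hxy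
  obtain ⟨η, hη, hη0⟩ := rolle y hy z hz hyz
  exact (hξ.2.trans hη.1).ne (hg' hξ0 hη0)

lemma gaussPhi_eq_gaussianPDFReal : gaussPhi = gaussianPDFReal 0 1 := by
  ext x
  simp [gaussPhi, gaussianPDFReal, div_eq_inv_mul, mul_comm]

lemma gaussPhi_pos (x : ℝ) : 0 < gaussPhi x := by
  rw [gaussPhi_eq_gaussianPDFReal]
  exact gaussianPDFReal_pos 0 1 x one_ne_zero

lemma continuous_gaussPhi : Continuous gaussPhi := by
  unfold gaussPhi
  fun_prop

lemma integrable_gaussPhi : Integrable gaussPhi := by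
  rw [gaussPhi_eq_gaussianPDFReal]
  exact integrable_gaussianPDFReal 0 1

lemma hasDerivAt_gaussPhi (v : ℝ) : HasDerivAt gaussPhi (-v * gaussPhi v) v := by
  have h : HasDerivAt (fun x : ℝ => -x ^ 2 / 2) (-v) v :=
    ((hasDerivAt_pow 2 v).neg.div_const 2).congr_deriv (by ring)
  exact (h.exp.div_const (Real.sqrt (2 * Real.pi))).congr_deriv (by unfold gaussPhi; ring)

lemma gaussCdf_eq_setIntegral (x : ℝ) : gaussCdf x = ∫ t in Set.Iic x, gaussPhi t := by
  rw [gaussCdf, gaussianReal_apply_eq_integral 0 one_ne_zero, ENNReal.toReal_ofReal,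
    gaussPhi_eq_gaussianPDFReal]
  exact setIntegral_nonneg measurableSet_Iic
    fun t _ => (gaussianPDFReal_pos 0 1 t one_ne_zero).le

lemma hasDerivAt_gaussCdf (v : ℝ) : HasDerivAt gaussCdf (gaussPhi v) v := by
  have hFTC : gaussCdf = fun x => gaussCdf 0 + ∫ t in (0 : ℝ)..x, gaussPhi t := by
    ext x
    rw [gaussCdf_eq_setIntegral, gaussCdf_eq_setIntegral, ← intervalIntegral.integral_Iic_sub_Iic
      integrable_gaussPhi.integrableOn integrable_gaussPhi.integrableOn]
    ring
  rw [hFTC]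
  exact (intervalIntegral.integral_hasDerivAt_right integrable_gaussPhi.intervalIntegrable
    (continuous_gaussPhi.stronglyMeasurableAtFilter _ _)
    continuous_gaussPhi.continuousAt).const_add _

lemma hasDerivAt_gaussPhi_div_add_mul_gaussCdf (b : ℝ) {v : ℝ} (hv : v ≠ 0) :
    HasDerivAt (fun x => gaussPhi x / x + b * gaussCdf x)
      (gaussPhi v * (b - 1 - 1 / v ^ 2)) v := by
  refine (((hasDerivAt_gaussPhi v).div (hasDerivAt_id' v) hv).add
    ((hasDerivAt_gaussCdf v).const_mul b)).congr_deriv ?_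
  field_simp
  ring

lemma subsingleton_zeros_gaussPhi_mul (b : ℝ) :
    {v ∈ Set.Ioi (0 : ℝ) | gaussPhi v * (b - 1 - 1 / v ^ 2) = 0}.Subsingleton := by
  rintro x ⟨hx, hx0⟩ y ⟨hy, hy0⟩
  rw [mul_eq_zero, or_iff_right (gaussPhi_pos x).ne'] at hx0
  rw [mul_eq_zero, or_iff_right (gaussPhi_pos y).ne'] at hy0
  have hsq : x ^ 2 = y ^ 2 := by simpa using hx0.trans hy0.symm
  exact (pow_left_inj₀ hx.le hy.le two_ne_zero).mp hsq

/-- For any `a b : ℝ`, the equation `φ(v)/v + b Φ(v) = a` has at most two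
solutions `v ∈ (0,∞)`. -/
theorem at_most_two_solutions (a b : ℝ) :
    ∃ v₁ v₂ : ℝ,
      {v : ℝ | 0 < v ∧ gaussPhi v / v + b * gaussCdf v = a} ⊆ {v₁, v₂} :=
  exists_levelSet_subset_pair_of_hasDerivAt Set.ordConnected_Ioi
    (fun _ hv => hasDerivAt_gaussPhi_div_add_mul_gaussCdf b (ne_of_gt hv))
    (subsingleton_zeros_gaussPhi_mul b) a
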